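/- arXiv:1909.10110 — 2 statements merged into one kernel-verified Lean document; each statement's English description precedes it below -/
import Mathlib

section
/- Let 0 < ε < 1/4 and K > 0, and let P be a probability measure on R^k with P(‖X‖_p ≤ K) > 1 − ε. Then for every θ in R^k with ‖θ‖_p ≥ 3K, one has M(P,θ) := ∫(‖x−θ‖_p − ‖x‖_p) dP(x) > 0. In particular any minimizer of M(P,·) satisfies ‖θ(P)‖_p ≤ 3K. -/
/-!
Write `T = ‖θ‖`. By the triangle inequality `‖x - θ‖ - ‖x‖ ≥ -T` everywhere, and
`‖x - θ‖ - ‖x‖ ≥ T - 2K` on the event `‖x‖ ≤ K`, whose probability `a` exceeds `3/4`.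
Hence `M(P, θ) ≥ (T - 2K) a - T (1 - a) = 2(T - K) a - T > (T - 3K) / 2 ≥ 0` once `T ≥ 3K`.
Since `M(P, 0) = 0`, a minimizer cannot lie in that region.
-/

open MeasureTheory

noncomputable def pnorm {k : ℕ} (p : ℝ) (z : Fin k → ℝ) : ℝ :=
  (∑ j, |z j| ^ p) ^ (1 / p)

namespace AddGroupSeminorm

variable {E : Type*} [AddGroup E]

lemma neg_le_map_sub_sub_map (N : AddGroupSeminorm E) (x θ : E) :
    -N θ ≤ N (x - θ) - N x := by
  have := map_add_le_add N (x - θ) θ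
  rw [sub_add_cancel] at this
  linarith

lemma sub_two_mul_le_map_sub_sub_map (N : AddGroupSeminorm E) (x θ : E) :
    N θ - 2 * N x ≤ N (x - θ) - N x := by
  have := le_map_add_map_sub N θ x
  rw [map_sub_rev] at this
  linarith

variable [MeasurableSpace E] [MeasurableSub E] (N : AddGroupSeminorm E) (hN : Measurable N)
  (P : Measure E)
include hN

lemma integrable_map_sub_sub_map [IsFiniteMeasure P] (θ : E) :
    Integrable (fun x => N (x - θ) - N x) P := by
  refine .of_bound ((hN.comp (measurable_sub_const θ)).sub hN).aestronglyMeasurable (N θ) ?_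
  refine .of_forall fun x => ?_
  rw [Real.norm_eq_abs, abs_le]
  exact ⟨neg_le_map_sub_sub_map N x θ, by linarith [map_sub_le_add N x θ]⟩

variable [IsProbabilityMeasure P]

theorem integral_map_sub_sub_map_pos {K : ℝ} (hK : 0 < K)
    (hP : 3 / 4 < P.real {x | N x ≤ K}) {θ : E} (hθ : 3 * K ≤ N θ) :
    0 < ∫ x, (N (x - θ) - N x) ∂P := by
  set A := {x | N x ≤ K}
  have hA : MeasurableSet A := measurableSet_le hN measurable_const
  have hint := integrable_map_sub_sub_map N hN P θ
  have h_in : (N θ - 2 * K) * P.real A ≤ ∫ x in A, (N (x - θ) - N x) ∂P :=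
    setIntegral_ge_of_const_le_real hA (measure_ne_top P A)
      (fun x (hx : N x ≤ K) => by linarith [sub_two_mul_le_map_sub_sub_map N x θ])
      hint.integrableOn
  have h_out : -N θ * P.real Aᶜ ≤ ∫ x in Aᶜ, (N (x - θ) - N x) ∂P :=
    setIntegral_ge_of_const_le_real hA.compl (measure_ne_top P Aᶜ)
      (fun x _ => neg_le_map_sub_sub_map N x θ) hint.integrableOn
  rw [← integral_add_compl hA hint]
  rw [probReal_compl_eq_one_sub hA] at h_out
  nlinarith

theorem map_lt_of_forall_integral_le {K : ℝ} (hK : 0 < K)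
    (hP : 3 / 4 < P.real {x | N x ≤ K}) {θP : E}
    (hmin : ∀ θ, ∫ x, (N (x - θP) - N x) ∂P ≤ ∫ x, (N (x - θ) - N x) ∂P) :
    N θP < 3 * K := by
  by_contra! hθP
  have := hmin 0
  simp only [sub_zero, sub_self, integral_zero] at this
  exact this.not_gt (integral_map_sub_sub_map_pos N hN P hK hP hθP)

end AddGroupSeminorm

section pnorm

variable {k : ℕ}

lemma measurable_pnorm (p : ℝ) : Measurable (pnorm (k := k) p) := by
  unfold pnorm
  fun_prop

noncomputable def pnormAddGroupSeminorm {p : ℝ} (hp : 1 ≤ p) : AddGroupSeminorm (Fin k → ℝ) where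
  toFun := pnorm p
  map_zero' := by
    simp [pnorm, Real.zero_rpow (by linarith : p ≠ 0), Real.zero_rpow (by positivity : p⁻¹ ≠ 0)]
  add_le' a b := by simpa [pnorm] using Real.Lp_add_le Finset.univ a b hp
  neg' z := by simp [pnorm]

end pnorm

theorem minimizer_bounded_general {k : ℕ} (p : ℝ) (hp : 1 ≤ p)
    (P : Measure (Fin k → ℝ)) [IsProbabilityMeasure P]
    (ε K : ℝ) (hε : ε < 1 / 4) (hK : 0 < K)
    (hPK : (P {x | pnorm p x ≤ K}).toReal > 1 - ε) :
    (∀ θ : Fin k → ℝ, 3 * K ≤ pnorm p θ →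
      0 < ∫ x, (pnorm p (x - θ) - pnorm p x) ∂P) ∧
    (∀ θP : Fin k → ℝ,
      (∀ θ : Fin k → ℝ, ∫ x, (pnorm p (x - θP) - pnorm p x) ∂P ≤
        ∫ x, (pnorm p (x - θ) - pnorm p x) ∂P) →
      pnorm p θP ≤ 3 * K) := by
  let N : AddGroupSeminorm (Fin k → ℝ) := pnormAddGroupSeminorm hp
  have hP : 3 / 4 < P.real {x | N x ≤ K} := by
    change 3 / 4 < (P {x | pnorm p x ≤ K}).toReal
    linarith
  exact ⟨fun θ hθ => N.integral_map_sub_sub_map_pos (measurable_pnorm p) P hK hP hθ,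
    fun θP hmin => (N.map_lt_of_forall_integral_le (measurable_pnorm p) P hK hP hmin).le⟩

/-- If `0 < ε < 1/4`, `K > 0` and `P(‖X‖_p ≤ K) > 1 − ε`, then every `θ` with
`‖θ‖_p ≥ 3K` satisfies `M(P,θ) = ∫(‖x−θ‖_p − ‖x‖_p) dP(x) > 0`; in particular any
minimizer of `M(P,·)` satisfies `‖θ(P)‖_p ≤ 3K`. -/
theorem minimizer_bounded {k : ℕ} (p : ℝ) (hp : 1 ≤ p)
    (P : Measure (Fin k → ℝ)) [IsProbabilityMeasure P]
    (ε K : ℝ) (hε0 : 0 < ε) (hε : ε < 1 / 4) (hK : 0 < K)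
    (hPK : (P {x | pnorm p x ≤ K}).toReal > 1 - ε) :
    (∀ θ : Fin k → ℝ, 3 * K ≤ pnorm p θ →
      0 < ∫ x, (pnorm p (x - θ) - pnorm p x) ∂P) ∧
    (∀ θP : Fin k → ℝ,
      (∀ θ : Fin k → ℝ, ∫ x, (pnorm p (x - θP) - pnorm p x) ∂P ≤
        ∫ x, (pnorm p (x - θ) - pnorm p x) ∂P) →
      pnorm p θP ≤ 3 * K) :=
  minimizer_bounded_general p hp P ε K hε hK hPK
end

section
/- If C and D are VC classes of subsets of a set X, then the classes C ⊓ D = {C ∩ D : C ∈ C, D ∈ D} and C ⊔ D = {C ∪ D : C ∈ C, D ∈ D} are also VC classes. -/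
/-- A collection `C` of subsets shatters a finite set `S` if every subset of `S`
is traced out by some member of `C`. -/
def Shatters {X : Type*} (C : Set (Set X)) (S : Finset X) : Prop :=
  ∀ T : Set X, T ⊆ (S : Set X) → ∃ c ∈ C, (S : Set X) ∩ c = T

/-- A collection of subsets is a VC class if for some `n` no `n`-point set is
shattered by it. -/
def IsVCClass {X : Type*} (C : Set (Set X)) : Prop :=
  ∃ n : ℕ, ∀ S : Finset X, S.card = n → ¬ Shatters C S

/-!
A class with VC index `n` picks out at most `∑_{k<n} (N choose k) ≤ (N + 1) ^ n` subsets of an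
`N`-point set (Sauer–Shelah, in Pajor's form: a family of finsets has at most as many members as
sets it shatters). Conversely, a class picking out polynomially many subsets cannot shatter large
sets, since `2 ^ N` eventually beats every polynomial. The trace of `c ∩ d` or `c ∪ d` on `S` is
determined by the traces of `c` and `d`, so the trace counts of the two classes multiply and stay
polynomial.
-/

open scoped Finset
open Filter Topology

lemma Nat.geom_sum_le_succ_pow (N n : ℕ) : ∑ k ∈ Finset.range n, N ^ k ≤ (N + 1) ^ n := by
  induction n with
  | zero => simp
  | succ n ih =>
    calc ∑ k ∈ Finset.range (n + 1), N ^ k = N * ∑ k ∈ Finset.range n, N ^ k + 1 := by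
          simp [Finset.sum_range_succ', pow_succ', Finset.mul_sum]
      _ ≤ N * (N + 1) ^ n + (N + 1) ^ n := by gcongr; exact Nat.one_le_pow _ _ N.succ_pos
      _ = (N + 1) ^ (n + 1) := by ring

lemma exists_succ_pow_lt_two_pow (k : ℕ) : ∃ N : ℕ, (N + 1) ^ k < 2 ^ N := by
  have h : Tendsto (fun N : ℕ => ((N + 1 : ℕ) : ℝ) ^ k / 2 ^ (N + 1)) atTop (𝓝 0) :=
    (tendsto_add_atTop_iff_nat 1).2 (tendsto_pow_const_div_const_pow_of_one_lt k one_lt_two)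
  obtain ⟨N, hN⟩ := (h.eventually (gt_mem_nhds one_half_pos)).exists
  refine ⟨N, ?_⟩
  rw [div_lt_iff₀ (by positivity), pow_succ] at hN
  exact_mod_cast (by linarith : ((N + 1 : ℕ) : ℝ) ^ k < 2 ^ N)

section Traces

variable {X : Type*}

open Classical in
noncomputable def traces (C : Set (Set X)) (S : Finset X) : Finset (Finset X) :=
  S.powerset.filter fun t => ∃ c ∈ C, (S : Set X) ∩ c = t

variable {C : Set (Set X)} {S t : Finset X}

lemma mem_traces : t ∈ traces C S ↔ ∃ c ∈ C, (S : Set X) ∩ c = t := by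
  classical
  refine ⟨fun h => (Finset.mem_filter.1 h).2,
    fun h => Finset.mem_filter.2 ⟨Finset.mem_powerset.2 ?_, h⟩⟩
  obtain ⟨c, -, hc⟩ := h
  exact Finset.coe_subset.1 (hc ▸ Set.inter_subset_left)

lemma traces_subset_powerset : traces C S ⊆ S.powerset := by
  classical
  exact Finset.filter_subset _ _

lemma shatters_iff_forall_finset :
    Shatters C S ↔ ∀ u ⊆ S, ∃ c ∈ C, (S : Set X) ∩ c = u := by
  refine ⟨fun h u hu => h u (Finset.coe_subset.2 hu), fun h T hT => ?_⟩
  obtain ⟨u, rfl⟩ := (S.finite_toSet.subset hT).exists_finset_coe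
  exact h u (Finset.coe_subset.1 hT)

lemma Shatters.powerset_subset_traces (h : Shatters C S) : S.powerset ⊆ traces C S :=
  fun u hu => mem_traces.2 (shatters_iff_forall_finset.1 h u (Finset.mem_powerset.1 hu))

lemma Shatters.mono {T : Finset X} (h : Shatters C S) (hTS : T ⊆ S) : Shatters C T := by
  rw [shatters_iff_forall_finset] at h ⊢
  intro u hu
  obtain ⟨c, hc, hSc⟩ := h u (hu.trans hTS)
  refine ⟨c, hc, ?_⟩
  rw [← Set.inter_eq_left.2 (Finset.coe_subset.2 hTS), Set.inter_assoc, hSc,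
    Set.inter_eq_right.2 (Finset.coe_subset.2 hu)]

lemma shatters_of_shatters_traces [DecidableEq X] (h : (traces C S).Shatters t) : Shatters C t := by
  obtain ⟨v, hv, htv⟩ := h.exists_superset
  have htS : (t : Set X) ⊆ S :=
    Finset.coe_subset.2 (htv.trans (Finset.mem_powerset.1 (traces_subset_powerset hv)))
  rw [shatters_iff_forall_finset]
  intro u hu
  obtain ⟨w, hw, htw⟩ := h hu
  obtain ⟨c, hc, hSc⟩ := mem_traces.1 hw
  refine ⟨c, hc, ?_⟩
  rw [← Set.inter_eq_left.2 htS, Set.inter_assoc, hSc, ← Finset.coe_inter, htw]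

end Traces

section PolynomialDiscrimination

variable {X : Type*} {C D : Set (Set X)}

def HasPolynomialDiscrimination (C : Set (Set X)) : Prop :=
  ∃ k : ℕ, ∀ S : Finset X, #(traces C S) ≤ (#S + 1) ^ k

lemma card_lt_of_shatters {n : ℕ} (hC : ∀ S : Finset X, #S = n → ¬ Shatters C S)
    {S : Finset X} (h : Shatters C S) : #S < n := by
  by_contra! hnS
  obtain ⟨T, hTS, hT⟩ := Finset.exists_subset_card_eq hnS
  exact hC T hT (h.mono hTS)

lemma card_traces_le_sum_choose {n : ℕ} (hC : ∀ S : Finset X, #S = n → ¬ Shatters C S)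
    (S : Finset X) : #(traces C S) ≤ ∑ k ∈ Finset.range n, (#S).choose k := by
  classical
  have hsub : (traces C S).shatterer ⊆ (Finset.range n).biUnion (S.powersetCard ·) := by
    intro t ht
    have hsh := Finset.mem_shatterer.1 ht
    obtain ⟨v, hv, htv⟩ := hsh.exists_superset
    refine Finset.mem_biUnion.2
      ⟨#t, Finset.mem_range.2 ?_, Finset.mem_powersetCard.2 ⟨?_, rfl⟩⟩
    · exact card_lt_of_shatters hC (shatters_of_shatters_traces hsh)
    · exact htv.trans (Finset.mem_powerset.1 (traces_subset_powerset hv))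
  calc #(traces C S) ≤ #(traces C S).shatterer := Finset.card_le_card_shatterer _
    _ ≤ #((Finset.range n).biUnion (S.powersetCard ·)) := Finset.card_le_card hsub
    _ ≤ ∑ k ∈ Finset.range n, #(S.powersetCard k) := Finset.card_biUnion_le
    _ = ∑ k ∈ Finset.range n, (#S).choose k := by simp only [Finset.card_powersetCard]

lemma IsVCClass.hasPolynomialDiscrimination (hC : IsVCClass C) :
    HasPolynomialDiscrimination C := by
  obtain ⟨n, hn⟩ := hC
  refine ⟨n, fun S => ?_⟩
  calc #(traces C S) ≤ ∑ k ∈ Finset.range n, (#S).choose k := card_traces_le_sum_choose hn S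
    _ ≤ ∑ k ∈ Finset.range n, #S ^ k := Finset.sum_le_sum fun k _ => Nat.choose_le_pow _ k
    _ ≤ (#S + 1) ^ n := Nat.geom_sum_le_succ_pow _ _

lemma HasPolynomialDiscrimination.isVCClass (hC : HasPolynomialDiscrimination C) :
    IsVCClass C := by
  obtain ⟨k, hk⟩ := hC
  obtain ⟨N, hN⟩ := exists_succ_pow_lt_two_pow k
  refine ⟨N, fun S hS hSC => ?_⟩
  have := (Finset.card_le_card hSC.powerset_subset_traces).trans (hk S)
  rw [Finset.card_powerset, hS] at this
  omega

lemma HasPolynomialDiscrimination.image2 (op : Set X → Set X → Set X)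
    (hop : ∀ s c d, s ∩ op c d = s ∩ op (s ∩ c) (s ∩ d))
    (hC : HasPolynomialDiscrimination C) (hD : HasPolynomialDiscrimination D) :
    HasPolynomialDiscrimination (Set.image2 op C D) := by
  classical
  obtain ⟨k, hk⟩ := hC
  obtain ⟨l, hl⟩ := hD
  refine ⟨k + l, fun S => ?_⟩
  have hsub : traces (Set.image2 op C D) S ⊆
      (traces C S ×ˢ traces D S).image fun p => S.filter (· ∈ op p.1 p.2) := by
    intro t ht
    obtain ⟨_, ⟨c, hc, d, hd, rfl⟩, hSt⟩ := mem_traces.1 ht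
    have hcoe (e : Set X) : ((S.filter (· ∈ e) : Finset X) : Set X) = (S : Set X) ∩ e := by
      ext; simp
    refine Finset.mem_image.2 ⟨(S.filter (· ∈ c), S.filter (· ∈ d)), Finset.mem_product.2
      ⟨mem_traces.2 ⟨c, hc, (hcoe c).symm⟩, mem_traces.2 ⟨d, hd, (hcoe d).symm⟩⟩, ?_⟩
    apply Finset.coe_injective
    rw [hcoe, hcoe, hcoe, ← hop, hSt]
  calc #(traces (Set.image2 op C D) S) ≤ #(traces C S ×ˢ traces D S) :=
        (Finset.card_le_card hsub).trans Finset.card_image_le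
    _ = #(traces C S) * #(traces D S) := Finset.card_product _ _
    _ ≤ (#S + 1) ^ k * (#S + 1) ^ l := Nat.mul_le_mul (hk S) (hl S)
    _ = (#S + 1) ^ (k + l) := (pow_add _ _ _).symm

lemma IsVCClass.image2 (op : Set X → Set X → Set X)
    (hop : ∀ s c d, s ∩ op c d = s ∩ op (s ∩ c) (s ∩ d))
    (hC : IsVCClass C) (hD : IsVCClass D) : IsVCClass (Set.image2 op C D) :=
  (hC.hasPolynomialDiscrimination.image2 op hop hD.hasPolynomialDiscrimination).isVCClass

end PolynomialDiscrimination

/-- If `C` and `D` are VC classes then so are the classes of pairwise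
intersections `{C ∩ D}` and pairwise unions `{C ∪ D}`. -/
theorem vc_inter_union {X : Type*} (C D : Set (Set X))
    (hC : IsVCClass C) (hD : IsVCClass D) :
    IsVCClass {s : Set X | ∃ c ∈ C, ∃ d ∈ D, s = c ∩ d} ∧
    IsVCClass {s : Set X | ∃ c ∈ C, ∃ d ∈ D, s = c ∪ d} := by
  have image2_eq (op : Set X → Set X → Set X) :
      {s : Set X | ∃ c ∈ C, ∃ d ∈ D, s = op c d} = Set.image2 op C D := by
    simp only [Set.image2, eq_comm]
  rw [image2_eq (· ∩ ·), image2_eq (· ∪ ·)]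
  refine ⟨hC.image2 _ (fun s c d => ?_) hD, hC.image2 _ (fun s c d => ?_) hD⟩
  all_goals ext; simp only [Set.mem_inter_iff, Set.mem_union]; tauto
end
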